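/- Let m ≥ 1 and let f be a real-valued function on the set of admissible words of length 2m such that: f(t) ≥ 0 for every admissible t; f is invariant under rotation (f(t ∘ (· + r)) = f(t) for all r ∈ ZMod 2m); and 2·f(t) ≥ f(d₁(t)) + f(d₂(t)) for every admissible word t. Then for every admissible word t, one has 2m · f(t) ≥ Σ_{i ∈ ZMod 2m} q_i(t) · f(c_i), where q_i(t) is the number of k ∈ ZMod 2m with t(k) = i. -/

import Mathlib

/-- A word of length `2*m`: a cyclic sequence of letter indices. -/
abbrev Word (m : ℕ) := ZMod (2*m) → ZMod (2*m)

/-- Rotation of a word by `r`. -/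
def rot (m : ℕ) (t : Word m) (r : ZMod (2*m)) : Word m := fun k => t (k + r)

/-- `ε` is a decoration of the word `t`. -/
def IsDecoration (m : ℕ) (t : Word m) (ε : ZMod (2*m) → ℤ) : Prop :=
  (∀ k, ε k = 1 ∨ ε k = -1) ∧
  (∀ k, ε k = 1 → ε (k+1) = 1 → t (k+1) = t k + 1) ∧
  (∀ k, ε k = -1 → ε (k+1) = -1 → t (k+1) = t k - 1) ∧
  (∀ k, ε k ≠ ε (k+1) → t (k+1) = t k)

/-- A word is admissible if it admits a decoration. -/
def Admissible (m : ℕ) (t : Word m) : Prop := ∃ ε, IsDecoration m t ε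

/-- First half-double: `d₁(t)(k) = t(k)` for `0 ≤ k ≤ m-1`, and
`d₁(t)(k) = t(2m-1-k)` for `m ≤ k ≤ 2m-1`. -/
def d1 (m : ℕ) (t : Word m) : Word m := fun k =>
  if k.val < m then t k else t ((2*m - 1 - k.val : ℕ) : ZMod (2*m))

/-- Second half-double: `d₂(t) = d₁(rotation of t by m)`. -/
def d2 (m : ℕ) (t : Word m) : Word m := d1 m (rot m t (m : ZMod (2*m)))

/-- `q m t i` is the number of `k` with `t k = i`. -/
def q (m : ℕ) [NeZero (2*m)] (t : Word m) (i : ZMod (2*m)) : ℕ :=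
  (Finset.univ.filter fun k => t k = i).card

/-!
The defect `2m · f(s) - Σₖ f(c_{s k})` is rotation invariant and satisfies the same doubling
inequality as `f`, because `d₁ s` and `d₂ s` together contain every letter of `s` exactly twice.
Minimise the pair (defect, number of change points) lexicographically over admissible words.
Averaging over rotations, a non-constant word `s` has a rotation `u` such that `d₁ u` has fewer
change points than `s`, and the doubling inequality makes `d₁ u` a minimiser of the defect as
well. Hence the minimiser is a constant word, on which the defect vanishes.
-/

open Finset Function

variable {m : ℕ}

def DecorationStep {G : Type*} [AddGroupWithOne G] (a b : G) (e e' : ℤ) : Prop :=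
  (e = 1 → e' = 1 → b = a + 1) ∧ (e = -1 → e' = -1 → b = a - 1) ∧ (e ≠ e' → b = a)

namespace DecorationStep

variable {G : Type*} [AddGroupWithOne G] {a b : G} {e e' : ℤ}

lemma reverse (h : DecorationStep a b e e') : DecorationStep b a (-e') (-e) :=
  ⟨fun h₁ h₂ => by rw [h.2.1 (by omega) (by omega), sub_add_cancel],
    fun h₁ h₂ => by rw [h.1 (by omega) (by omega), add_sub_cancel_right],
    fun hne => (h.2.2 (by omega)).symm⟩

lemma self_of_ne (h : e ≠ e') : DecorationStep a a e e' :=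
  ⟨fun h₁ h₂ => absurd (h₁.trans h₂.symm) h, fun h₁ h₂ => absurd (h₁.trans h₂.symm) h,
    fun _ => rfl⟩

end DecorationStep

lemma isDecoration_iff {t : Word m} {ε : ZMod (2*m) → ℤ} :
    IsDecoration m t ε ↔
      (∀ k, ε k = 1 ∨ ε k = -1) ∧ ∀ k, DecorationStep (t k) (t (k + 1)) (ε k) (ε (k + 1)) := by
  simp only [IsDecoration, DecorationStep, forall_and]

lemma Admissible.rot {t : Word m} (ht : Admissible m t) (r : ZMod (2*m)) :
    Admissible m (_root_.rot m t r) := by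
  obtain ⟨ε, hε, hstep⟩ := ht.imp fun _ => isDecoration_iff.1
  refine ⟨fun k => ε (k + r), isDecoration_iff.2 ⟨fun k => hε _, fun k => ?_⟩⟩
  simpa only [_root_.rot, add_right_comm k 1 r] using hstep (k + r)

section Halves

variable [NeZero (2*m)]

lemma pos_of_neZero_two_mul : 0 < m :=
  Nat.pos_of_ne_zero fun h => NeZero.ne (2*m) (by simp [h])

namespace ZMod

lemma natCast_two_mul_sub_one_sub_val (k : ZMod (2*m)) :
    ((2*m - 1 - k.val : ℕ) : ZMod (2*m)) = -k - 1 := by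
  have := k.val_lt
  rw [Nat.cast_sub (by omega), Nat.cast_sub (by omega), natCast_self, natCast_zmod_val]
  push_cast
  ring

lemma val_neg_sub_one (k : ZMod (2*m)) : (-k - 1).val = 2*m - 1 - k.val := by
  have := k.val_lt
  rw [← natCast_two_mul_sub_one_sub_val, val_natCast_of_lt (by omega)]

lemma val_add_one_eq (k : ZMod (2*m)) :
    (k + 1).val = k.val + 1 ∨ (k + 1).val = 0 ∧ k.val + 1 = 2*m := by
  have h1 : (1 : ZMod (2*m)).val = 1 :=
    val_one'' (by have := pos_of_neZero_two_mul (m := m); omega)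
  by_cases hk : k.val + 1 < 2*m
  · exact .inl (by rw [val_add_of_lt (by omega), h1])
  · have := k.val_lt
    exact .inr ⟨by rw [val_add_of_le (by omega), h1]; omega, by omega⟩

lemma val_add_half_lt_iff (k : ZMod (2*m)) :
    (k + (m : ZMod (2*m))).val < m ↔ ¬ k.val < m := by
  have hm : ((m : ℕ) : ZMod (2*m)).val = m :=
    val_natCast_of_lt (by have := pos_of_neZero_two_mul (m := m); omega)
  have := k.val_lt
  by_cases hk : k.val + m < 2*m
  · rw [val_add_of_lt (by omega), hm]; omega
  · rw [val_add_of_le (by omega), hm]; omega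

end ZMod

open ZMod

lemma d1_apply (t : Word m) (k : ZMod (2*m)) :
    d1 m t k = if k.val < m then t k else t (-k - 1) := by
  rw [d1, natCast_two_mul_sub_one_sub_val]

lemma d1_neg_sub_one (t : Word m) (k : ZMod (2*m)) : d1 m t (-k - 1) = d1 m t k := by
  have := k.val_lt
  by_cases hk : k.val < m
  · rw [d1_apply, if_neg (by rw [val_neg_sub_one]; omega), d1_apply, if_pos hk,
      show -(-k - 1) - 1 = k by ring]
  · rw [d1_apply, if_pos (by rw [val_neg_sub_one]; omega), d1_apply, if_neg hk]

namespace Admissible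

variable {t : Word m}

/-- Reflect the decoration together with the word on the second half; the two junctions, at
`m - 1` and `2m - 1`, then carry a repeated letter with opposite signs. -/
lemma d1 (ht : Admissible m t) : Admissible m (d1 m t) := by
  obtain ⟨ε, hε, hstep⟩ := ht.imp fun _ => isDecoration_iff.1
  refine ⟨fun k => if k.val < m then ε k else -ε (-k - 1),
    isDecoration_iff.2 ⟨fun k => ?_, fun k => ?_⟩⟩
  · split_ifs
    · exact hε k
    · rcases hε (-k - 1) with h | h <;> simp [h]
  · have := k.val_lt
    simp only [d1_apply]
    by_cases hk : k.val < m <;> by_cases hk1 : (k + 1).val < m <;>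
      simp only [hk, hk1, if_true, if_false]
    · exact hstep k
    · have hmid : -(k + 1) - 1 = k := val_injective _ <| by
        rw [val_neg_sub_one]; rcases val_add_one_eq k with h | h <;> omega
      rw [hmid]
      exact .self_of_ne (by rcases hε k with h | h <;> omega)
    · have hend : -k - 1 = k + 1 := val_injective _ <| by
        rw [val_neg_sub_one]; rcases val_add_one_eq k with h | h <;> omega
      rw [hend]
      exact .self_of_ne (by rcases hε (k + 1) with h | h <;> omega)
    · simpa only [show -(k + 1) - 1 + 1 = -k - 1 by ring] using (hstep (-(k + 1) - 1)).reverse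

lemma d2 (ht : Admissible m t) : Admissible m (d2 m t) :=
  (ht.rot _).d1

end Admissible

section Sums

variable {M : Type*} [AddCommMonoid M] (F : ZMod (2*m) → M) (t : Word m)

lemma sum_q_smul : ∑ i, q m t i • F i = ∑ k, F (t k) := by
  rw [← sum_fiberwise' univ t F]
  exact sum_congr rfl fun i _ => by rw [q, sum_const]

lemma sum_rot (r : ZMod (2*m)) : ∑ k, F (rot m t r k) = ∑ k, F (t k) :=
  Equiv.sum_comp (Equiv.addRight r) (F ∘ t)

lemma sum_d1 : ∑ k, F (d1 m t k) = 2 • ∑ k with k.val < m, F (t k) := by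
  have hσ : Involutive fun k : ZMod (2*m) => -k - 1 := fun k => by ring
  simp only [d1_apply, apply_ite F]
  rw [sum_ite, two_nsmul]
  congr 1
  refine sum_equiv hσ.toPerm (fun k => ?_) fun _ _ => rfl
  have := k.val_lt
  simp only [mem_filter, mem_univ, true_and, Involutive.coe_toPerm, val_neg_sub_one]
  omega

lemma sum_d2 : ∑ k, F (d2 m t k) = 2 • ∑ k with ¬ k.val < m, F (t k) := by
  rw [d2, sum_d1]
  congr 1
  refine sum_equiv (Equiv.addRight (m : ZMod (2*m))) (fun k => ?_) fun _ _ => rfl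
  simp only [mem_filter, mem_univ, true_and, Equiv.coe_addRight, val_add_half_lt_iff, not_not]

lemma sum_d1_add_sum_d2 : ∑ k, F (d1 m t k) + ∑ k, F (d2 m t k) = 2 • ∑ k, F (t k) := by
  rw [sum_d1, sum_d2, ← nsmul_add, sum_filter_add_sum_filter_not]

end Sums

def changePoints (t : Word m) : Finset (ZMod (2*m)) := {k | t (k + 1) ≠ t k}

variable {t : Word m}

lemma mem_changePoints {k : ZMod (2*m)} : k ∈ changePoints t ↔ t (k + 1) ≠ t k := by
  simp [changePoints]

lemma mem_changePoints_rot {r k : ZMod (2*m)} :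
    k ∈ changePoints (rot m t r) ↔ k + r ∈ changePoints t := by
  simp only [mem_changePoints, rot, add_right_comm k 1 r]

lemma eq_const_of_changePoints_eq_empty (h : changePoints t = ∅) : t = fun _ => t 0 := by
  have hper : Periodic t 1 := fun k => by
    simpa [mem_changePoints] using eq_empty_iff_forall_notMem.1 h k
  funext k
  simpa using hper.nat_mul k.val 0

/-- A palindrome never changes letter across the junctions `m - 1` and `2m - 1`, and the
reflection `k ↦ -k - 2` exchanges its change points on the two sides. -/
lemma card_changePoints_of_palindrome {w : Word m} (hw : ∀ k, w (-k - 1) = w k) :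
    #(changePoints w) = 2 * #{k ∈ changePoints w | k.val + 1 < m} := by
  have hjunction : ∀ k ∈ changePoints w, k.val + 1 ≠ m ∧ k.val + 1 ≠ 2*m := by
    refine fun k hk => not_or.1 fun hj => ?_
    have := (k + 1).val_lt
    have := pos_of_neZero_two_mul (m := m)
    have : -k - 1 = k + 1 := val_injective _ <| by
      rw [val_neg_sub_one]; rcases val_add_one_eq k with h | h <;> omega
    exact mem_changePoints.1 hk (by rw [← this, hw])
  have hτ : Involutive fun k : ZMod (2*m) => -(k + 1) - 1 := fun k => by ring
  have hmem : ∀ k, -(k + 1) - 1 ∈ changePoints w ↔ k ∈ changePoints w := fun k => by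
    rw [mem_changePoints, mem_changePoints, hw, show -(k + 1) - 1 + 1 = -k - 1 by ring, hw,
      ne_comm]
  have := card_filter_add_card_filter_not (s := changePoints w) fun k => k.val + 1 < m
  suffices #{k ∈ changePoints w | ¬ k.val + 1 < m} = #{k ∈ changePoints w | k.val + 1 < m} by
    omega
  refine card_equiv hτ.toPerm fun k => ?_
  simp only [mem_filter, Involutive.coe_toPerm, hmem]
  refine and_congr_right fun hk => ?_
  have := k.val_lt
  have := hjunction k hk
  rw [val_neg_sub_one]
  rcases val_add_one_eq k with h | h <;> omega

lemma card_changePoints_d1 (t : Word m) :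
    #(changePoints (d1 m t)) = 2 * #{k ∈ changePoints t | k.val + 1 < m} := by
  rw [card_changePoints_of_palindrome (d1_neg_sub_one t)]
  congr 2
  ext k
  simp only [mem_filter, mem_changePoints, and_congr_left_iff]
  intro hk
  have hk1 : (k + 1).val < m := by rcases val_add_one_eq k with h | h <;> omega
  rw [d1_apply, d1_apply, if_pos hk1, if_pos (by omega)]

lemma sum_card_changePoints_rot_filter (t : Word m) (P : ZMod (2*m) → Prop) [DecidablePred P] :
    ∑ r, #{k ∈ changePoints (rot m t r) | P k} = #{k | P k} * #(changePoints t) := by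
  calc ∑ r, #{k ∈ changePoints (rot m t r) | P k}
      = ∑ r, ∑ k with P k, if k + r ∈ changePoints t then 1 else 0 := by
        refine sum_congr rfl fun r _ => ?_
        rw [← card_filter]
        congr 1
        ext k
        simp only [mem_filter, mem_univ, true_and, mem_changePoints_rot, and_comm]
    _ = ∑ k with P k, #(changePoints t) := by
        rw [sum_comm]
        refine sum_congr rfl fun k _ => ?_
        rw [Fintype.sum_equiv (Equiv.addLeft k) (fun r => if k + r ∈ changePoints t then 1 else 0)
          (fun r => if r ∈ changePoints t then 1 else 0) fun _ => rfl]
        simp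
    _ = #{k | P k} * #(changePoints t) := by rw [sum_const, smul_eq_mul]

lemma card_filter_val_add_one_lt_le : #{k : ZMod (2*m) | k.val + 1 < m} ≤ m - 1 :=
  (card_le_card_of_injOn ZMod.val (fun k hk => by simp at hk ⊢; omega)
    (ZMod.val_injective _).injOn).trans (card_range _).le

lemma exists_rot_card_changePoints_d1_lt (ht : (changePoints t).Nonempty) :
    ∃ r, #(changePoints (d1 m (rot m t r))) < #(changePoints t) := by
  by_contra! h
  have hsum : 2*m * #(changePoints t) ≤ 2 * ((m - 1) * #(changePoints t)) := calc
    2*m * #(changePoints t) = ∑ r : ZMod (2*m), #(changePoints t) := by simp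
    _ ≤ ∑ r, #(changePoints (d1 m (rot m t r))) := sum_le_sum fun r _ => h r
    _ = 2 * ∑ r, #{k ∈ changePoints (rot m t r) | k.val + 1 < m} := by
        simp only [card_changePoints_d1, mul_sum]
    _ ≤ 2 * ((m - 1) * #(changePoints t)) := by
        rw [sum_card_changePoints_rot_filter]
        gcongr
        exact card_filter_val_add_one_lt_le
  have := ht.card_pos
  have := pos_of_neZero_two_mul (m := m)
  have : (m - 1) * #(changePoints t) < m * #(changePoints t) := by gcongr; omega
  linarith

theorem exists_const_le_of_double_le {α : Type*} [AddCommMonoid α] [LinearOrder α]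
    [IsOrderedCancelAddMonoid α] (g : Word m → α)
    (hrot : ∀ t r, Admissible m t → g (rot m t r) = g t)
    (hdouble : ∀ t, Admissible m t → g (d1 m t) + g (d2 m t) ≤ g t + g t)
    (ht : Admissible m t) : ∃ i, g (fun _ => i) ≤ g t := by
  classical
  obtain ⟨s, hs, hmin⟩ := exists_min_image {s | Admissible m s}
    (fun s => toLex (g s, #(changePoints s))) ⟨t, by simpa using ht⟩
  simp only [mem_filter, mem_univ, true_and] at hs hmin
  have hle : ∀ u, Admissible m u → g s ≤ g u := fun u hu =>
    (Prod.Lex.toLex_le_toLex.1 (hmin u hu)).elim le_of_lt fun h => h.1.le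
  obtain hcp | hcp := (changePoints s).eq_empty_or_nonempty
  · exact ⟨s 0, eq_const_of_changePoints_eq_empty hcp ▸ hle t ht⟩
  obtain ⟨r, hr⟩ := exists_rot_card_changePoints_d1_lt hcp
  have hu := hs.rot r
  have hd1 : g (d1 m (rot m s r)) ≤ g s := le_of_add_le_add_left <| calc
    g s + g (d1 m (rot m s r)) ≤ g (d2 m (rot m s r)) + g (d1 m (rot m s r)) :=
      add_le_add_left (hle _ hu.d2) _
    _ ≤ g s + g s := by rw [add_comm, ← hrot s r hs]; exact hdouble _ hu
  exact ((hmin _ hu.d1).not_gt <|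
    Prod.Lex.toLex_lt_toLex.2 (hd1.lt_or_eq.imp_right fun h => ⟨h, hr⟩)).elim

end Halves

theorem volume_reduction_general (m : ℕ) [NeZero (2*m)] (f : Word m → ℝ)
    (hrotinv : ∀ (t : Word m) (r : ZMod (2*m)), Admissible m t → f (rot m t r) = f t)
    (hdouble : ∀ t, Admissible m t → f (d1 m t) + f (d2 m t) ≤ 2 * f t)
    (t : Word m) (ht : Admissible m t) :
    (∑ i : ZMod (2*m), (q m t i : ℝ) * f (fun _ => i)) ≤ ((2*m : ℕ) : ℝ) * f t := by
  set F : ZMod (2*m) → ℝ := fun i => f fun _ => i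
  set defect : Word m → ℝ := fun s => (2*m : ℕ) * f s - ∑ k, F (s k)
  have hrot (s : Word m) (r) (hs : Admissible m s) : defect (rot m s r) = defect s := by
    simp only [defect, hrotinv s r hs, sum_rot]
  have hdefect_double (s : Word m) (hs : Admissible m s) :
      defect (d1 m s) + defect (d2 m s) ≤ defect s + defect s := by
    have hf := mul_le_mul_of_nonneg_left (hdouble s hs) (Nat.cast_nonneg (2*m))
    have hsum := sum_d1_add_sum_d2 F s
    simp only [defect, two_nsmul] at hsum ⊢
    linarith
  obtain ⟨i, hi⟩ := exists_const_le_of_double_le defect hrot hdefect_double ht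
  have hconst : defect (fun _ => i) = 0 := by
    simp [defect, F, card_univ, ZMod.card]
  have hq : ∑ i, (q m t i : ℝ) * F i = ∑ k, F (t k) := by
    simp only [← nsmul_eq_mul, sum_q_smul]
  rw [hq]
  exact sub_nonneg.1 (hconst ▸ hi)

/-- If `f` is nonnegative on admissible words, rotation invariant, and satisfies the
doubling inequality `2 f(t) ≥ f(d₁ t) + f(d₂ t)`, then
`2m · f(t) ≥ Σ_i q_i(t) · f(c_i)` for every admissible word `t`. -/
theorem volume_reduction (m : ℕ) (hm : 1 ≤ m) [NeZero (2*m)] (f : Word m → ℝ)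
    (hnonneg : ∀ t, Admissible m t → 0 ≤ f t)
    (hrotinv : ∀ (t : Word m) (r : ZMod (2*m)), Admissible m t → f (rot m t r) = f t)
    (hdouble : ∀ t, Admissible m t → f (d1 m t) + f (d2 m t) ≤ 2 * f t)
    (t : Word m) (ht : Admissible m t) :
    (∑ i : ZMod (2*m), (q m t i : ℝ) * f (fun _ => i)) ≤ ((2*m : ℕ) : ℝ) * f t :=
  volume_reduction_general m f hrotinv hdouble t ht
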